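/- For every N ∈ ℕ ∪ {0} there exists a constant C > 0, depending only on N, with the following property: for all ε ∈ (0,1), A > 0, and every continuous function F : (0, ε^{−1}] → ℝ with |F(r)| ≤ A·ε³·(1+r)^{−1−2N} for all 0 < r ≤ ε^{−1}, there exists a twice continuously differentiable function b : (0, ε^{−1}] → ℝ such that b''(r) + b'(r)/r + 8(N+1)² r^{2N}(1+r^{2N+2})^{−2} b(r) = F(r) for all 0 < r ≤ ε^{−1}, lim_{r→0⁺} b(r) = 0, and |b(r)| ≤ C·A·ε²·log(2+r) for all 0 < r ≤ ε^{−1}. -/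

import Mathlib

/-!
The kernel of the linearized operator `b'' + b'/r + W b` is spanned by the scaling mode
`Z₀ = (1 - r^(2N+2)) / (1 + r^(2N+2))` and `Z₁ = (N + 1) Z₀ log r + 1`, with Wronskian
`r (Z₁' Z₀ - Z₀' Z₁) = N + 1`. Variation of parameters with both primitives taken from `0`
gives `b = (Z₁ ∫₀ʳ ρ Z₀ F - Z₀ ∫₀ʳ ρ Z₁ F) / (N + 1)`. The decay of `F` gives
`ρ |F ρ| ≤ A ε³ min ρ 1`; together with `|Z₀| ≤ 1` and `|Z₁ r| min r 1 ≤ 2 (N + 2) log (2 + r)`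
this yields `|b r| ≤ 4 (N + 2) A ε³ r log (2 + r)`, which tends to `0` at the origin and is at
most `4 (N + 2) A ε² log (2 + r)` for `r ≤ ε⁻¹`.
-/

open Filter Topology Set MeasureTheory

noncomputable section

section VariationOfParameters

variable {W z z' z'' z₀ z₀' z₀'' z₁ z₁' z₁'' F f f' f'' g : ℝ → ℝ} {c r M : ℝ}

theorem contDiffOn_two_of_hasDerivAt {s : Set ℝ} (hs : IsOpen s)
    (hf : ∀ x ∈ s, HasDerivAt f (f' x) x) (hf' : ∀ x ∈ s, HasDerivAt f' (f'' x) x)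
    (hf'' : ContinuousOn f'' s) : ContDiffOn ℝ 2 f s := by
  have hderiv : EqOn (deriv f) f' s := fun x hx => (hf x hx).deriv
  have hderiv' : EqOn (deriv f') f'' s := fun x hx => (hf' x hx).deriv
  rw [show (2 : WithTop ℕ∞) = 1 + 1 from rfl, contDiffOn_succ_iff_deriv_of_isOpen hs]
  refine ⟨fun x hx => (hf x hx).differentiableAt.differentiableWithinAt, by simp, ?_⟩
  refine ContDiffOn.congr ?_ hderiv
  rw [show (1 : WithTop ℕ∞) = 0 + 1 from rfl, contDiffOn_succ_iff_deriv_of_isOpen hs]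
  refine ⟨fun x hx => (hf' x hx).differentiableAt.differentiableWithinAt, by simp, ?_⟩
  exact contDiffOn_zero.2 (hf''.congr hderiv')

theorem ContinuousOn.intervalIntegrable_of_abs_le (hg : ContinuousOn g (Ioi 0)) (hr : 0 < r)
    (hM : ∀ ρ ∈ Ioc 0 r, |g ρ| ≤ M) : IntervalIntegrable g volume 0 r := by
  rw [intervalIntegrable_iff_integrableOn_Ioc_of_le hr.le]
  refine IntegrableOn.of_bound measure_Ioc_lt_top
    ((hg.mono Ioc_subset_Ioi_self).aestronglyMeasurable measurableSet_Ioc) M ?_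
  filter_upwards [ae_restrict_mem measurableSet_Ioc] with ρ hρ
  exact hM ρ hρ

theorem abs_integral_le_of_abs_le (hr : 0 ≤ r) (hM : ∀ ρ ∈ Ioc 0 r, |g ρ| ≤ M) :
    |∫ ρ in (0 : ℝ)..r, g ρ| ≤ M * r := by
  simpa [abs_of_nonneg hr] using intervalIntegral.norm_integral_le_of_norm_le_const
    (a := 0) (b := r) (f := g) (fun ρ hρ => hM ρ (uIoc_of_le hr ▸ hρ))

def IsRadialKernel (W z z' z'' : ℝ → ℝ) : Prop :=
  ∀ r, 0 < r → HasDerivAt z (z' r) r ∧ HasDerivAt z' (z'' r) r ∧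
    z'' r + z' r / r + W r * z r = 0

theorem IsRadialKernel.continuousOn (hz : IsRadialKernel W z z' z'') :
    ContinuousOn z (Ioi 0) :=
  fun r hr => (hz r hr).1.continuousAt.continuousWithinAt

def radialPrimitive (z F : ℝ → ℝ) (r : ℝ) : ℝ := ∫ ρ in (0 : ℝ)..r, ρ * z ρ * F ρ

theorem hasDerivAt_radialPrimitive (hz : ContinuousOn z (Ioi 0)) (hF : ContinuousOn F (Ioi 0))
    (hint : IntervalIntegrable (fun ρ => ρ * z ρ * F ρ) volume 0 r) (hr : 0 < r) :
    HasDerivAt (radialPrimitive z F) (r * z r * F r) r := by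
  have hcont : ContinuousOn (fun ρ => ρ * z ρ * F ρ) (Ioi 0) :=
    (continuousOn_id.mul hz).mul hF
  exact intervalIntegral.integral_hasDerivAt_right hint
    (hcont.stronglyMeasurableAtFilter isOpen_Ioi r hr)
    (hcont.continuousAt (Ioi_mem_nhds hr))

/-- Here `c` is the (constant) Wronskian `r (z₁' z₀ - z₀' z₁)` of the kernel pair. -/
def variationOfParameters (z₀ z₁ F : ℝ → ℝ) (c r : ℝ) : ℝ :=
  c⁻¹ * (z₁ r * radialPrimitive z₀ F r - z₀ r * radialPrimitive z₁ F r)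

theorem IsRadialKernel.variationOfParameters_solves (h₀ : IsRadialKernel W z₀ z₀' z₀'')
    (h₁ : IsRadialKernel W z₁ z₁' z₁'') (hwr : ∀ r, 0 < r → r * (z₁' r * z₀ r - z₀' r * z₁ r) = c)
    (hc : c ≠ 0) (hW : ContinuousOn W (Ioi 0)) (hF : ContinuousOn F (Ioi 0))
    (hint₀ : ∀ r, 0 < r → IntervalIntegrable (fun ρ => ρ * z₀ ρ * F ρ) volume 0 r)
    (hint₁ : ∀ r, 0 < r → IntervalIntegrable (fun ρ => ρ * z₁ ρ * F ρ) volume 0 r) :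
    ContDiffOn ℝ 2 (variationOfParameters z₀ z₁ F c) (Ioi 0) ∧
      ∀ r, 0 < r → deriv (deriv (variationOfParameters z₀ z₁ F c)) r
        + deriv (variationOfParameters z₀ z₁ F c) r / r
        + W r * variationOfParameters z₀ z₁ F c r = F r := by
  set b := variationOfParameters z₀ z₁ F c
  set P₀ := radialPrimitive z₀ F
  set P₁ := radialPrimitive z₁ F
  set b' := fun r => c⁻¹ * (z₁' r * P₀ r - z₀' r * P₁ r)
  set b'' := fun r => c⁻¹ * (z₁'' r * P₀ r - z₀'' r * P₁ r) + F r
  have hP₀ : ∀ r, 0 < r → HasDerivAt P₀ (r * z₀ r * F r) r := fun r hr =>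
    hasDerivAt_radialPrimitive h₀.continuousOn hF (hint₀ r hr) hr
  have hP₁ : ∀ r, 0 < r → HasDerivAt P₁ (r * z₁ r * F r) r := fun r hr =>
    hasDerivAt_radialPrimitive h₁.continuousOn hF (hint₁ r hr) hr
  -- the terms coming from differentiating the primitives cancel
  have hb : ∀ r ∈ Ioi (0 : ℝ), HasDerivAt b (b' r) r := fun r hr => by
    refine ((((h₁ r hr).1.mul (hP₀ r hr)).sub ((h₀ r hr).1.mul (hP₁ r hr))).const_mul
      c⁻¹).congr_deriv ?_
    ring
  -- here they leave `F` times the Wronskian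
  have hb' : ∀ r ∈ Ioi (0 : ℝ), HasDerivAt b' (b'' r) r := fun r hr => by
    refine (((((h₁ r hr).2.1.mul (hP₀ r hr)).sub ((h₀ r hr).2.1.mul (hP₁ r hr))).const_mul
      c⁻¹).congr_deriv ?_)
    linear_combination (c⁻¹ * F r) * hwr r hr + F r * inv_mul_cancel₀ hc
  have hode : ∀ r ∈ Ioi (0 : ℝ), b'' r + b' r / r + W r * b r = F r := fun r hr => by
    simp only [b, b', b'', variationOfParameters]
    linear_combination (c⁻¹ * P₀ r) * (h₁ r hr).2.2 - (c⁻¹ * P₁ r) * (h₀ r hr).2.2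
  have hderiv : ∀ r ∈ Ioi (0 : ℝ), deriv b r = b' r := fun r hr => (hb r hr).deriv
  have hderiv2 : ∀ r ∈ Ioi (0 : ℝ), deriv (deriv b) r = b'' r := fun r hr => by
    have hev : deriv b =ᶠ[𝓝 r] b' := eventually_of_mem (Ioi_mem_nhds hr) hderiv
    rw [hev.deriv_eq]
    exact (hb' r hr).deriv
  refine ⟨contDiffOn_two_of_hasDerivAt isOpen_Ioi hb hb' ?_, fun r hr => ?_⟩
  · have hcb : ContinuousOn b (Ioi 0) := fun r hr => (hb r hr).continuousAt.continuousWithinAt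
    have hcb' : ContinuousOn b' (Ioi 0) := fun r hr =>
      (hb' r hr).continuousAt.continuousWithinAt
    have hcont : ContinuousOn (fun r => F r - b' r / r - W r * b r) (Ioi 0) :=
      (hF.sub (hcb'.div continuousOn_id fun r hr => ne_of_gt hr)).sub (hW.mul hcb)
    exact hcont.congr fun r hr => by linear_combination hode r hr
  · rw [hderiv2 r hr, hderiv r hr]
    exact hode r hr

end VariationOfParameters

section BubbleKernel

variable (N : ℕ)

def bubbleWeight (r : ℝ) : ℝ := 8 * (N + 1 : ℝ) ^ 2 * r ^ (2 * N) / (1 + r ^ (2 * N + 2)) ^ 2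

/-- Up to the factor `2N + 2`, the derivative at `λ = 1` of the scaled bubbles
`U(λ y) + (2N + 2) log λ`, hence a kernel element. -/
def bubbleZ₀ (r : ℝ) : ℝ := (1 - r ^ (2 * N + 2)) / (1 + r ^ (2 * N + 2))

def bubbleZ₀' (r : ℝ) : ℝ := -(4 * (N + 1 : ℝ)) * r ^ (2 * N + 1) / (1 + r ^ (2 * N + 2)) ^ 2

def bubbleZ₀'' (r : ℝ) : ℝ :=
  -(4 * (N + 1 : ℝ)) * ((2 * N + 1) * r ^ (2 * N) * (1 + r ^ (2 * N + 2))
    - 4 * (N + 1) * r ^ (4 * N + 2)) / (1 + r ^ (2 * N + 2)) ^ 3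

/-- The second kernel element, from reduction of order. -/
def bubbleZ₁ (r : ℝ) : ℝ := (N + 1) * Real.log r * bubbleZ₀ N r + 1

def bubbleZ₁' (r : ℝ) : ℝ := (N + 1) * (Real.log r * bubbleZ₀' N r + bubbleZ₀ N r / r)

def bubbleZ₁'' (r : ℝ) : ℝ :=
  (N + 1) * (Real.log r * bubbleZ₀'' N r + 2 * bubbleZ₀' N r / r - bubbleZ₀ N r / r ^ 2)

theorem one_add_pow_two_mul_add_two_pos (r : ℝ) : 0 < 1 + r ^ (2 * N + 2) := by
  have : 0 ≤ r ^ (2 * N + 2) := Even.pow_nonneg ⟨N + 1, by ring⟩ r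
  linarith

theorem hasDerivAt_bubbleZ₀ (r : ℝ) : HasDerivAt (bubbleZ₀ N) (bubbleZ₀' N r) r := by
  have hP := hasDerivAt_pow (2 * N + 2) r
  have hd := (one_add_pow_two_mul_add_two_pos N r).ne'
  refine ((hP.const_sub 1).div (hP.const_add 1) hd).congr_deriv ?_
  rw [bubbleZ₀', show 2 * N + 2 - 1 = 2 * N + 1 by omega]
  field_simp
  push_cast
  ring

theorem hasDerivAt_bubbleZ₀' (r : ℝ) : HasDerivAt (bubbleZ₀' N) (bubbleZ₀'' N r) r := by
  have hP := hasDerivAt_pow (2 * N + 2) r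
  have hd := (one_add_pow_two_mul_add_two_pos N r).ne'
  refine (((hasDerivAt_pow (2 * N + 1) r).const_mul (-(4 * (N + 1 : ℝ)))).div
    ((hP.const_add 1).pow 2) (pow_ne_zero 2 hd)).congr_deriv ?_
  rw [bubbleZ₀'', show 2 * N + 2 - 1 = 2 * N + 1 by omega,
    show 2 * N + 1 - 1 = 2 * N by omega, Pi.pow_apply]
  field_simp
  push_cast
  ring

theorem hasDerivAt_bubbleZ₁ {r : ℝ} (hr : 0 < r) :
    HasDerivAt (bubbleZ₁ N) (bubbleZ₁' N r) r := by
  refine ((((Real.hasDerivAt_log hr.ne').const_mul (N + 1 : ℝ)).mul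
    (hasDerivAt_bubbleZ₀ N r)).add_const 1).congr_deriv ?_
  rw [bubbleZ₁']
  field_simp
  ring

theorem hasDerivAt_bubbleZ₁' {r : ℝ} (hr : 0 < r) :
    HasDerivAt (bubbleZ₁' N) (bubbleZ₁'' N r) r := by
  refine ((((Real.hasDerivAt_log hr.ne').mul (hasDerivAt_bubbleZ₀' N r)).add
    ((hasDerivAt_bubbleZ₀ N r).div (hasDerivAt_id r) hr.ne')).const_mul
    (N + 1 : ℝ)).congr_deriv ?_
  rw [bubbleZ₁'', id]
  field_simp
  ring

theorem isRadialKernel_bubbleZ₀ :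
    IsRadialKernel (bubbleWeight N) (bubbleZ₀ N) (bubbleZ₀' N) (bubbleZ₀'' N) := by
  refine fun r _ => ⟨hasDerivAt_bubbleZ₀ N r, hasDerivAt_bubbleZ₀' N r, ?_⟩
  have hd := (one_add_pow_two_mul_add_two_pos N r).ne'
  rw [bubbleWeight, bubbleZ₀'', bubbleZ₀', bubbleZ₀]
  field_simp
  ring

theorem isRadialKernel_bubbleZ₁ :
    IsRadialKernel (bubbleWeight N) (bubbleZ₁ N) (bubbleZ₁' N) (bubbleZ₁'' N) := by
  refine fun r hr => ⟨hasDerivAt_bubbleZ₁ N hr, hasDerivAt_bubbleZ₁' N hr, ?_⟩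
  have hd := (one_add_pow_two_mul_add_two_pos N r).ne'
  rw [bubbleWeight, bubbleZ₁'', bubbleZ₁', bubbleZ₁, bubbleZ₀'', bubbleZ₀', bubbleZ₀]
  field_simp
  ring

theorem bubble_wronskian {r : ℝ} (hr : 0 < r) :
    r * (bubbleZ₁' N r * bubbleZ₀ N r - bubbleZ₀' N r * bubbleZ₁ N r) = N + 1 := by
  have hd := (one_add_pow_two_mul_add_two_pos N r).ne'
  rw [bubbleZ₁', bubbleZ₁, bubbleZ₀', bubbleZ₀]
  field_simp
  ring

theorem continuous_bubbleWeight : Continuous (bubbleWeight N) :=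
  Continuous.div (by fun_prop) (by fun_prop)
    fun r => pow_ne_zero 2 (one_add_pow_two_mul_add_two_pos N r).ne'

end BubbleKernel

section Estimates

open Real

variable (N : ℕ)

theorem abs_bubbleZ₀_le_one (r : ℝ) : |bubbleZ₀ N r| ≤ 1 := by
  have hP : 0 ≤ r ^ (2 * N + 2) := Even.pow_nonneg ⟨N + 1, by ring⟩ r
  rw [bubbleZ₀, abs_div, abs_of_pos (one_add_pow_two_mul_add_two_pos N r),
    div_le_one (one_add_pow_two_mul_add_two_pos N r), abs_le]
  constructor <;> linarith

theorem abs_bubbleZ₁_le (r : ℝ) : |bubbleZ₁ N r| ≤ (N + 1) * |log r| + 1 := by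
  have hZ₀ := abs_bubbleZ₀_le_one N r
  calc |bubbleZ₁ N r| ≤ |(N + 1) * log r * bubbleZ₀ N r| + |1| := abs_add_le _ _
    _ = (N + 1) * |log r| * |bubbleZ₀ N r| + 1 := by
      rw [abs_mul, abs_mul, abs_one, abs_of_pos (by positivity : (0 : ℝ) < N + 1)]
    _ ≤ (N + 1) * |log r| * 1 + 1 := by gcongr
    _ = (N + 1) * |log r| + 1 := by ring

theorem one_le_two_mul_log_two_add {r : ℝ} (hr : 0 ≤ r) : 1 ≤ 2 * log (2 + r) := by
  have := log_le_log two_pos (by linarith : (2 : ℝ) ≤ 2 + r)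
  linarith [log_two_gt_d9]

theorem abs_bubbleZ₁_mul_min_le {r : ℝ} (hr : 0 < r) :
    |bubbleZ₁ N r| * min r 1 ≤ 2 * (N + 2) * log (2 + r) := by
  have hlog := one_le_two_mul_log_two_add hr.le
  have hZ₁ := abs_bubbleZ₁_le N r
  rcases le_total r 1 with h | h
  · have hrlog : |log r| * r ≤ 1 := by
      simpa [abs_mul, abs_of_pos hr] using (abs_log_mul_self_lt r hr h).le
    rw [min_eq_left h]
    calc |bubbleZ₁ N r| * r ≤ ((N + 1) * |log r| + 1) * r := by gcongr
      _ = (N + 1) * (|log r| * r) + r := by ring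
      _ ≤ (N + 1) * 1 + 1 := by gcongr
      _ ≤ 2 * (N + 2) * log (2 + r) := by nlinarith
  · have hlog_le : |log r| ≤ log (2 + r) := by
      rw [abs_of_nonneg (log_nonneg h)]
      exact log_le_log hr (by linarith)
    rw [min_eq_right h, mul_one]
    calc |bubbleZ₁ N r| ≤ (N + 1) * |log r| + 1 := hZ₁
      _ ≤ (N + 1) * log (2 + r) + 2 * log (2 + r) := by gcongr
      _ ≤ 2 * (N + 2) * log (2 + r) := by nlinarith

theorem mul_one_add_rpow_le_min {r p : ℝ} (hr : 0 ≤ r) (hp : p ≤ -1) :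
    r * (1 + r) ^ p ≤ min r 1 := by
  have hpow : (1 + r) ^ p ≤ (1 + r)⁻¹ := by
    rw [← rpow_neg_one]
    exact rpow_le_rpow_of_exponent_le (by linarith) hp
  have hinv : (1 + r)⁻¹ ≤ 1 := inv_le_one_of_one_le₀ (by linarith)
  have hr_div : r * (1 + r)⁻¹ ≤ 1 := by
    rw [← div_eq_mul_inv, div_le_one (by linarith)]
    linarith
  calc r * (1 + r) ^ p ≤ r * (1 + r)⁻¹ := by gcongr
    _ ≤ min r 1 := le_min (mul_le_of_le_one_right hr hinv) hr_div

end Estimates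

/-- Beyond `R` the extension keeps `r G(r)` frozen at its value at `R`, so the decay bound
`r |G r| ≤ K min r 1` survives on all of `(0, ∞)`. -/
theorem exists_extension_of_mul_abs_le {F : ℝ → ℝ} {R K : ℝ} (hR : 0 < R)
    (hF : ContinuousOn F (Ioc 0 R)) (hFK : ∀ r ∈ Ioc 0 R, r * |F r| ≤ K * min r 1) :
    ∃ G : ℝ → ℝ, ContinuousOn G (Ioi 0) ∧ EqOn G F (Ioc 0 R) ∧
      ∀ r, 0 < r → r * |G r| ≤ K * min r 1 := by
  have hK : 0 ≤ K := nonneg_of_mul_nonneg_left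
    ((mul_nonneg hR.le (abs_nonneg _)).trans (hFK R ⟨hR, le_rfl⟩)) (lt_min hR one_pos)
  have hmaps : MapsTo (fun r => min r R) (Ioi 0) (Ioc 0 R) :=
    fun r hr => ⟨lt_min hr hR, min_le_right r R⟩
  refine ⟨fun r => min r R * F (min r R) / r, ?_, fun r hr => ?_, fun r hr => ?_⟩
  · have hmin : ContinuousOn (fun r => min r R) (Ioi 0) := by fun_prop
    exact (hmin.mul (hF.comp hmin hmaps)).div continuousOn_id fun r hr => ne_of_gt hr
  · simp only [min_eq_left hr.2]
    field_simp [hr.1.ne']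
  · have hm := hmaps hr
    calc r * |min r R * F (min r R) / r| = min r R * |F (min r R)| := by
          rw [abs_div, abs_mul, abs_of_pos hr, abs_of_pos hm.1]
          field_simp
      _ ≤ K * min (min r R) 1 := hFK _ hm
      _ ≤ K * min r 1 := mul_le_mul_of_nonneg_left (min_le_min_right 1 (min_le_left r R)) hK

section BubbleSolution

open Real

variable (N : ℕ) {F : ℝ → ℝ} {K : ℝ}

def bubbleSolution (F : ℝ → ℝ) : ℝ → ℝ :=
  variationOfParameters (bubbleZ₀ N) (bubbleZ₁ N) F (N + 1)

theorem nonneg_of_forall_mul_abs_le (hFK : ∀ r, 0 < r → r * |F r| ≤ K * min r 1) : 0 ≤ K := by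
  simpa using (abs_nonneg (F 1)).trans (by simpa using hFK 1 one_pos)

theorem abs_mul_bubbleZ₀_mul_le (hFK : ∀ r, 0 < r → r * |F r| ≤ K * min r 1) {ρ r : ℝ}
    (hρ : ρ ∈ Ioc 0 r) : |ρ * bubbleZ₀ N ρ * F ρ| ≤ K * min r 1 :=
  calc |ρ * bubbleZ₀ N ρ * F ρ| = |bubbleZ₀ N ρ| * (ρ * |F ρ|) := by
        rw [abs_mul, abs_mul, abs_of_pos hρ.1]; ring
    _ ≤ 1 * (K * min ρ 1) :=
        mul_le_mul (abs_bubbleZ₀_le_one N ρ) (hFK ρ hρ.1) (mul_nonneg hρ.1.le (abs_nonneg _))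
          zero_le_one
    _ ≤ K * min r 1 := by
        rw [one_mul]
        exact mul_le_mul_of_nonneg_left (min_le_min_right 1 hρ.2)
          (nonneg_of_forall_mul_abs_le hFK)

theorem abs_mul_bubbleZ₁_mul_le (hFK : ∀ r, 0 < r → r * |F r| ≤ K * min r 1) {ρ r : ℝ}
    (hρ : ρ ∈ Ioc 0 r) : |ρ * bubbleZ₁ N ρ * F ρ| ≤ 2 * (N + 2) * K * log (2 + r) := by
  have hK := nonneg_of_forall_mul_abs_le hFK
  have hlog : log (2 + ρ) ≤ log (2 + r) := log_le_log (by linarith [hρ.1]) (by linarith [hρ.2])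
  calc |ρ * bubbleZ₁ N ρ * F ρ| = |bubbleZ₁ N ρ| * (ρ * |F ρ|) := by
        rw [abs_mul, abs_mul, abs_of_pos hρ.1]; ring
    _ ≤ |bubbleZ₁ N ρ| * (K * min ρ 1) :=
        mul_le_mul_of_nonneg_left (hFK ρ hρ.1) (abs_nonneg _)
    _ = K * (|bubbleZ₁ N ρ| * min ρ 1) := by ring
    _ ≤ K * (2 * (N + 2) * log (2 + r)) :=
        mul_le_mul_of_nonneg_left ((abs_bubbleZ₁_mul_min_le N hρ.1).trans (by gcongr)) hK
    _ = 2 * (N + 2) * K * log (2 + r) := by ring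

theorem bubbleSolution_solves (hF : ContinuousOn F (Ioi 0))
    (hFK : ∀ r, 0 < r → r * |F r| ≤ K * min r 1) :
    ContDiffOn ℝ 2 (bubbleSolution N F) (Ioi 0) ∧
      ∀ r, 0 < r → deriv (deriv (bubbleSolution N F)) r + deriv (bubbleSolution N F) r / r
        + bubbleWeight N r * bubbleSolution N F r = F r := by
  have h₀ := isRadialKernel_bubbleZ₀ N
  have h₁ := isRadialKernel_bubbleZ₁ N
  refine h₀.variationOfParameters_solves h₁ (fun r hr => bubble_wronskian N hr) (by positivity)
    (continuous_bubbleWeight N).continuousOn hF (fun r hr => ?_) (fun r hr => ?_)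
  · exact ((continuousOn_id.mul h₀.continuousOn).mul hF).intervalIntegrable_of_abs_le hr
      fun ρ hρ => abs_mul_bubbleZ₀_mul_le N hFK hρ
  · exact ((continuousOn_id.mul h₁.continuousOn).mul hF).intervalIntegrable_of_abs_le hr
      fun ρ hρ => abs_mul_bubbleZ₁_mul_le N hFK hρ

theorem abs_bubbleSolution_le (hFK : ∀ r, 0 < r → r * |F r| ≤ K * min r 1) {r : ℝ}
    (hr : 0 < r) : |bubbleSolution N F r| ≤ 4 * (N + 2) * K * (r * log (2 + r)) := by
  have hK := nonneg_of_forall_mul_abs_le hFK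
  have hP₀ : |radialPrimitive (bubbleZ₀ N) F r| ≤ K * min r 1 * r :=
    abs_integral_le_of_abs_le hr.le fun ρ hρ => abs_mul_bubbleZ₀_mul_le N hFK hρ
  have hP₁ : |radialPrimitive (bubbleZ₁ N) F r| ≤ 2 * (N + 2) * K * log (2 + r) * r :=
    abs_integral_le_of_abs_le hr.le fun ρ hρ => abs_mul_bubbleZ₁_mul_le N hFK hρ
  have hc : ((N : ℝ) + 1)⁻¹ ≤ 1 := inv_le_one_of_one_le₀ (by linarith [N.cast_nonneg (α := ℝ)])
  calc |bubbleSolution N F r|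
      ≤ 1 * (|bubbleZ₁ N r| * |radialPrimitive (bubbleZ₀ N) F r|
        + |bubbleZ₀ N r| * |radialPrimitive (bubbleZ₁ N) F r|) := by
        rw [bubbleSolution, variationOfParameters, abs_mul, abs_of_pos (by positivity),
          ← abs_mul, ← abs_mul]
        exact mul_le_mul hc (abs_sub _ _) (abs_nonneg _) zero_le_one
    _ ≤ |bubbleZ₁ N r| * (K * min r 1 * r) + 1 * (2 * (N + 2) * K * log (2 + r) * r) := by
        rw [one_mul]
        gcongr
        exact abs_bubbleZ₀_le_one N r
    _ = K * r * (|bubbleZ₁ N r| * min r 1) + 2 * (N + 2) * K * (r * log (2 + r)) := by ring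
    _ ≤ K * r * (2 * (N + 2) * log (2 + r)) + 2 * (N + 2) * K * (r * log (2 + r)) := by
        gcongr ?_ + _
        exact mul_le_mul_of_nonneg_left (abs_bubbleZ₁_mul_min_le N hr) (by positivity)
    _ = 4 * (N + 2) * K * (r * log (2 + r)) := by ring

end BubbleSolution

theorem stmt16 (N : ℕ) :
    ∃ C : ℝ, 0 < C ∧
      ∀ ε A : ℝ, 0 < ε → ε < 1 → 0 < A →
        ∀ F : ℝ → ℝ, ContinuousOn F (Set.Ioc 0 ε⁻¹) →
          (∀ r : ℝ, 0 < r → r ≤ ε⁻¹ →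
            |F r| ≤ A * ε ^ 3 * (1 + r) ^ (-1 - 2 * (N : ℝ))) →
          ∃ b : ℝ → ℝ, ContDiffOn ℝ 2 b (Set.Ioc 0 ε⁻¹) ∧
            (∀ r : ℝ, 0 < r → r ≤ ε⁻¹ →
              deriv (deriv b) r + deriv b r / r
                + 8 * (N + 1 : ℝ) ^ 2 * r ^ (2 * N) / (1 + r ^ (2 * N + 2)) ^ 2 * b r
              = F r) ∧
            Tendsto b (nhdsWithin 0 (Set.Ioi 0)) (nhds 0) ∧
            (∀ r : ℝ, 0 < r → r ≤ ε⁻¹ →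
              |b r| ≤ C * A * ε ^ 2 * Real.log (2 + r)) := by
  refine ⟨4 * (N + 2), by positivity, fun ε A hε _ hA F hFc hFb => ?_⟩
  have hFK : ∀ r ∈ Ioc 0 ε⁻¹, r * |F r| ≤ A * ε ^ 3 * min r 1 := fun r hr =>
    calc r * |F r| ≤ r * (A * ε ^ 3 * (1 + r) ^ (-1 - 2 * (N : ℝ))) :=
          mul_le_mul_of_nonneg_left (hFb r hr.1 hr.2) hr.1.le
      _ = A * ε ^ 3 * (r * (1 + r) ^ (-1 - 2 * (N : ℝ))) := by ring
      _ ≤ A * ε ^ 3 * min r 1 := by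
          gcongr
          exact mul_one_add_rpow_le_min hr.1.le (by linarith [N.cast_nonneg (α := ℝ)])
  obtain ⟨G, hGc, hGF, hGK⟩ := exists_extension_of_mul_abs_le (inv_pos.2 hε) hFc hFK
  obtain ⟨hb, hode⟩ := bubbleSolution_solves N hGc hGK
  have hbound := fun r (hr : 0 < r) => abs_bubbleSolution_le N hGK hr
  refine ⟨bubbleSolution N G, hb.mono Ioc_subset_Ioi_self,
    fun r h₀ h₁ => (hode r h₀).trans (hGF ⟨h₀, h₁⟩), ?_, fun r h₀ h₁ => (hbound r h₀).trans ?_⟩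
  · have hcont : ContinuousAt (fun r => 4 * (N + 2) * (A * ε ^ 3) * (r * Real.log (2 + r))) 0 :=
      by fun_prop (disch := norm_num)
    refine squeeze_zero_norm' ?_ (by simpa using hcont.tendsto.mono_left nhdsWithin_le_nhds)
    filter_upwards [self_mem_nhdsWithin] with r hr using hbound r hr
  · have hεr : ε ^ 3 * r ≤ ε ^ 2 := by
      calc ε ^ 3 * r ≤ ε ^ 3 * ε⁻¹ := by gcongr
        _ = ε ^ 2 := by field_simp
    have hlog : 0 ≤ Real.log (2 + r) := Real.log_nonneg (by linarith)
    calc 4 * (N + 2) * (A * ε ^ 3) * (r * Real.log (2 + r))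
        = 4 * (N + 2) * A * (ε ^ 3 * r) * Real.log (2 + r) := by ring
      _ ≤ 4 * (N + 2) * A * ε ^ 2 * Real.log (2 + r) := by gcongr
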